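/- For every natural number r ≥ 4, taking n = r, there exist r-disjoint uniformly bounded families U_0 and U_1 of subsets of as⊔_{i=n}^∞ X_{ω+1}^{(i,n)} such that U_0 ∪ U_1 covers as⊔_{i=n}^∞ X_{ω+1}^{(i,n)}. -/

import Mathlib

open Metric Set Filter ENNReal

noncomputable section

namespace AsympPaper

/-- The distance between two subsets of a (pseudo)metric space,
`d(A,B) = inf {dist a b : a ∈ A, b ∈ B}`, valued in `ℝ≥0∞` (it is `∞` if `A` or `B` is empty). -/
def setEDist {X : Type*} [PseudoMetricSpace X] (A B : Set X) : ℝ≥0∞ :=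
  ⨅ a ∈ A, ⨅ b ∈ B, edist a b

/-- A family `𝒰` of subsets of a metric space is `r`-disjoint if `d(U,V) > r`
for all distinct `U, V ∈ 𝒰`. -/
def RDisjoint {X : Type*} [PseudoMetricSpace X] (r : ℝ) (𝒰 : Set (Set X)) : Prop :=
  ∀ U ∈ 𝒰, ∀ V ∈ 𝒰, U ≠ V → ENNReal.ofReal r < setEDist U V

/-- A family `𝒰` of subsets of a metric space is uniformly bounded if
`sup {diam U : U ∈ 𝒰} < ∞`. -/
def UniformlyBdd {X : Type*} [PseudoMetricSpace X] (𝒰 : Set (Set X)) : Prop :=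
  ∃ R : ℝ, ∀ U ∈ 𝒰, ∀ x ∈ U, ∀ y ∈ U, dist x y ≤ R

/-- `Msub M σ` is the set `M^σ = {τ ∈ Fin ℕ : τ ∪ σ ∈ M and τ ∩ σ = ∅}`,
where `Fin ℕ` is the collection of finite nonempty subsets of `ℕ`. -/
def Msub (M : Set (Finset ℕ)) (σ : Finset ℕ) : Set (Finset ℕ) :=
  {τ | τ.Nonempty ∧ τ ∪ σ ∈ M ∧ τ ∩ σ = ∅}

/-- `OrdLE M α` is the relation `Ord M ≤ α`:  `Ord ∅ = 0` (so `Ord ∅ ≤ α` always), and for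
`M ≠ ∅`, `Ord M ≤ α` iff `Ord M^a < α` for every `a ∈ ℕ`. -/
def OrdLE (M : Set (Finset ℕ)) (α : Ordinal.{0}) : Prop :=
  M = ∅ ∨ ∀ a : ℕ, ∃ β : {β : Ordinal.{0} // β < α}, OrdLE (Msub M {a}) β.1
termination_by α
decreasing_by exact β.2

/-- `Ord M < α`. -/
def OrdLT (M : Set (Finset ℕ)) (α : Ordinal.{0}) : Prop := ∃ β < α, OrdLE M β

/-- `Ord M = α`. -/
def OrdEq (M : Set (Finset ℕ)) (α : Ordinal.{0}) : Prop := OrdLE M α ∧ ¬ OrdLT M α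

/-- `A(X)`: the set of finite nonempty `σ ⊆ ℕ` such that there are *no* uniformly bounded
families `𝒰 i` for `i ∈ σ`, each `𝒰 i` being `i`-disjoint, with `⋃_{i ∈ σ} 𝒰 i` covering `X`. -/
def AX (X : Type*) [PseudoMetricSpace X] : Set (Finset ℕ) :=
  {σ | σ.Nonempty ∧ ¬ ∃ 𝒰 : ℕ → Set (Set X),
      (∀ i ∈ σ, UniformlyBdd (𝒰 i) ∧ RDisjoint (i : ℝ) (𝒰 i)) ∧
      ∀ x : X, ∃ i ∈ σ, ∃ U ∈ 𝒰 i, x ∈ U}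

/-- `trasdim(X) ≤ γ`, i.e. `Ord A(X) ≤ γ`. -/
def TrasdimLE (X : Type*) [PseudoMetricSpace X] (γ : Ordinal.{0}) : Prop := OrdLE (AX X) γ

/-- `trasdim(X) = γ`, i.e. `Ord A(X) = γ`. -/
def TrasdimEq (X : Type*) [PseudoMetricSpace X] (γ : Ordinal.{0}) : Prop := OrdEq (AX X) γ

/-- Auxiliary for `coasdim`: `CoasdimLEAux A lam n` says `coasdim(A) ≤ lam + n` where `lam` is
a limit ordinal or `0` and `n ∈ ℕ`: for every `r > 0` there are `r`-disjoint uniformly bounded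
families `𝒰 0, …, 𝒰 n` of subsets of `A` such that `coasdim(A \ ⋃ i, ⋃₀ 𝒰 i) < lam`
(where `coasdim = -1` exactly for `∅`). -/
def CoasdimLEAux {X : Type*} [PseudoMetricSpace X] (A : Set X) (lam : Ordinal.{0}) (n : ℕ) :
    Prop :=
  ∀ r : ℝ, 0 < r → ∃ 𝒰 : Fin (n + 1) → Set (Set X),
    (∀ i, (∀ U ∈ 𝒰 i, U ⊆ A) ∧ UniformlyBdd (𝒰 i) ∧ RDisjoint r (𝒰 i)) ∧
    ((A \ ⋃ i, ⋃₀ 𝒰 i) = ∅ ∨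
      ∃ q : {q : Ordinal.{0} × ℕ // q.1 + q.2 < lam ∧ (q.1 = 0 ∨ Order.IsSuccLimit q.1)},
        CoasdimLEAux (A \ ⋃ i, ⋃₀ 𝒰 i) q.1.1 q.1.2)
termination_by lam
decreasing_by first
  | exact lt_of_le_of_lt le_self_add q.2.1
  | exact lt_of_le_of_lt (le_add_of_nonneg_right (zero_le _)) q.2.1

/-- `coasdim(A) ≤ γ` for a subset `A` of an ambient metric space (with the induced metric). -/
def CoasdimLE {X : Type*} [PseudoMetricSpace X] (A : Set X) (γ : Ordinal.{0}) : Prop :=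
  ∃ lam : Ordinal.{0}, ∃ n : ℕ, (lam = 0 ∨ Order.IsSuccLimit lam) ∧ γ = lam + n ∧ CoasdimLEAux A lam n

/-- `coasdim(A) = γ`. -/
def CoasdimEq {X : Type*} [PseudoMetricSpace X] (A : Set X) (γ : Ordinal.{0}) : Prop :=
  CoasdimLE A γ ∧ ∀ β < γ, ¬ CoasdimLE A β

/-- `1 + 2 + ⋯ + (i-1) = i(i-1)/2`, as a real number. -/
def triHalf (i : ℕ) : ℝ := ((i * (i - 1)) / 2 : ℕ)

/-- The asymptotic union `as⊔_{i=1}^∞ Z_i` of a sequence of subspaces `Z_i = S i` of an ambient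
metric space `Z` (indices with `S i = ∅` are vacuous; in particular take `S 0 = ∅` to start
the union at `i = 1`). A point is a pair `(i, x)` with `x ∈ S i`. -/
structure AsUnion {Z : Type*} (S : ℕ → Set Z) where
  idx : ℕ
  pt : S idx

/-- The metric of the asymptotic union: `d((l,x),(k,y)) = d_Z(x,y) + c` where, for `l ≤ k`,
`c = 0` if `l = k` and `c = l + (l+1) + ⋯ + (k-1)` if `l < k`. -/
instance AsUnion.instPseudoMetricSpace {Z : Type*} [PseudoMetricSpace Z] (S : ℕ → Set Z) :
    PseudoMetricSpace (AsUnion S) where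
  dist p q := dist (p.pt : Z) (q.pt : Z) + |triHalf p.idx - triHalf q.idx|
  dist_self p := by simp
  dist_comm p q := by
    show dist (p.pt : Z) (q.pt : Z) + |triHalf p.idx - triHalf q.idx|
      = dist (q.pt : Z) (p.pt : Z) + |triHalf q.idx - triHalf p.idx|
    rw [dist_comm, abs_sub_comm]
  dist_triangle p q r := by
    show dist (p.pt : Z) (r.pt : Z) + |triHalf p.idx - triHalf r.idx|
      ≤ (dist (p.pt : Z) (q.pt : Z) + |triHalf p.idx - triHalf q.idx|)
        + (dist (q.pt : Z) (r.pt : Z) + |triHalf q.idx - triHalf r.idx|)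
    have h1 := dist_triangle (p.pt : Z) (q.pt : Z) (r.pt : Z)
    have h2 := abs_sub_le (triHalf p.idx) (triHalf q.idx) (triHalf r.idx)
    linarith

/-- The ambient space `⊕ ℝ` of sequences, realized inside the bounded
functions `ℕ →ᵇ ℝ` with the sup-metric. -/
abbrev Amb : Type := BoundedContinuousFunction ℕ ℝ

/-- `t ∈ 2^n ℤ`. -/
def IsMultiple (n : ℕ) (t : ℝ) : Prop := ∃ m : ℤ, t = (m : ℝ) * 2 ^ n

/-- `X_{ω+k}^{(i,n)} = {x ∈ ℝ^i : #{j : x_j ∉ 2^n ℤ} ≤ k}`, realized as the subset of `⊕ ℝ`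
of sequences supported on the first `i` coordinates. -/
def XSet (k i n : ℕ) : Set Amb :=
  {f | (∀ j, i ≤ j → f j = 0) ∧ ({j | j < i ∧ ¬ IsMultiple n (f j)}).ncard ≤ k}

/-- `X_{ω+k} = as⊔_{i=1}^∞ X_{ω+k}^{(i)}` where `X_{ω+k}^{(i)} = X_{ω+k}^{(i,i)}`. -/
def XOmegaPlus (k : ℕ) : Type := AsUnion (fun i => if i = 0 then (∅ : Set Amb) else XSet k i i)

instance (k : ℕ) : PseudoMetricSpace (XOmegaPlus k) :=
  AsUnion.instPseudoMetricSpace _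

/-- `as⊔_{i=n}^∞ X_{ω+k}^{(i,n)}`. -/
def XTail (k n : ℕ) : Type := AsUnion (fun i => if i < n then (∅ : Set Amb) else XSet k i n)

instance (k n : ℕ) : PseudoMetricSpace (XTail k n) :=
  AsUnion.instPseudoMetricSpace _

/-- `Y_{ω+k}^{(i)} = {x ∈ (2^k ℤ)^i : #{j : x_j ∉ 2^i ℤ} ≤ k}` inside `⊕ ℝ`. -/
def YSet (k i : ℕ) : Set Amb :=
  {f | (∀ j, i ≤ j → f j = 0) ∧ (∀ j, j < i → IsMultiple k (f j)) ∧
    ({j | j < i ∧ ¬ IsMultiple i (f j)}).ncard ≤ k}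

/-- `Y_{ω+k} = as⊔_{i=1}^∞ Y_{ω+k}^{(i)}`. -/
def YOmegaPlus (k : ℕ) : Type := AsUnion (fun i => if i = 0 then (∅ : Set Amb) else YSet k i)

instance (k : ℕ) : PseudoMetricSpace (YOmegaPlus k) :=
  AsUnion.instPseudoMetricSpace _

/-- `ℝ^i` inside `⊕ ℝ`. -/
def RSet (i : ℕ) : Set Amb := {f | ∀ j, i ≤ j → f j = 0}

/-- The ambient space `as⊔_{i=1}^∞ ℝ^i`. -/
def AsR : Type := AsUnion (fun i => if i = 0 then (∅ : Set Amb) else RSet i)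

instance : PseudoMetricSpace AsR := AsUnion.instPseudoMetricSpace _

/-- `Y_{ω+k}` viewed as a subspace of `as⊔_{i=1}^∞ ℝ^i`. -/
def YSub (k : ℕ) : Set AsR := {p | (p.pt : Amb) ∈ YSet k p.idx}

/-- `Y_{2ω} = as⊔_{k=1}^∞ Y_{ω+k}`, the `Y_{ω+k}` being subspaces of `as⊔_{i=1}^∞ ℝ^i`. -/
def Y2Omega : Type := AsUnion (fun k => if k = 0 then (∅ : Set AsR) else YSub k)

instance : PseudoMetricSpace Y2Omega := AsUnion.instPseudoMetricSpace _

/-- A family covers the space. -/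
def Covers {X : Type*} (𝒰 : Set (Set X)) : Prop := ∀ x : X, ∃ U ∈ 𝒰, x ∈ U

/-- The Lebesgue number `L(𝒰) = inf_{x ∈ X} sup {r > 0 : ∃ U ∈ 𝒰, B(x,r) ⊆ U}`,
valued in `ℝ≥0∞`. -/
def lebesgueNum {X : Type*} [PseudoMetricSpace X] (𝒰 : Set (Set X)) : ℝ≥0∞ :=
  ⨅ x : X, sSup {e : ℝ≥0∞ | ∃ r : ℝ, 0 < r ∧ e = ENNReal.ofReal r ∧ ∃ U ∈ 𝒰, Metric.ball x r ⊆ U}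

/-- The multiplicity `m(𝒰)`: the maximal number of members of `𝒰` with nonempty
intersection, valued in `ℕ∞`. -/
def covMult {X : Type*} (𝒰 : Set (Set X)) : ℕ∞ :=
  sSup {m : ℕ∞ | ∃ t : Finset (Set X), ↑t ⊆ 𝒰 ∧ (⋂₀ (t : Set (Set X))).Nonempty ∧ m = t.card}

/-- The asymptotic dimension function
`ad_X(λ) = min {m(𝒰) : 𝒰 a uniformly bounded cover of X with L(𝒰) ≥ λ} - 1`. -/
def adim (X : Type*) [PseudoMetricSpace X] (lam : ℝ) : ℕ∞ :=
  sInf {m : ℕ∞ | ∃ 𝒰 : Set (Set X), UniformlyBdd 𝒰 ∧ Covers 𝒰 ∧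
    ENNReal.ofReal lam ≤ lebesgueNum 𝒰 ∧ m = covMult 𝒰} - 1

/-- `(2^k ℤ)^n` as a subset of `ℝ^n` (the latter carrying the sup-metric). -/
def grid (k n : ℕ) : Set (Fin n → ℝ) := {x | ∀ j, IsMultiple k (x j)}

/-- `g̃(r) = max {k ∈ ℕ : ad_{(2^k ℤ)^{g(r)}}(r) = g(r)}`. -/
def gtilde (g : ℝ → ℕ) (r : ℝ) : ℕ :=
  sSup {k : ℕ | adim (grid k (g r)) r = (g r : ℕ∞)}

/-- `(2^k ℤ)^n` realized inside `⊕ ℝ`: sequences supported on the first `n` coordinates,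
with those coordinates in `2^k ℤ`. -/
def gridSet (k n : ℕ) : Set Amb :=
  {f | (∀ j, n ≤ j → f j = 0) ∧ ∀ j, j < n → IsMultiple k (f j)}

/-- `X_ω(g) = as⊔_{i=1}^∞ (2^{g̃(i)} ℤ)^{g(i)}`. -/
def XOmegaG (g : ℝ → ℕ) : Type :=
  AsUnion (fun i => if i = 0 then (∅ : Set Amb) else gridSet (gtilde g (i : ℝ)) (g (i : ℝ)))

instance (g : ℝ → ℕ) : PseudoMetricSpace (XOmegaG g) := AsUnion.instPseudoMetricSpace _

/-- `f : X → Y` is a coarse equivalence: a coarse embedding with coarsely dense image. -/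
def IsCoarseEquiv {X Y : Type*} [PseudoMetricSpace X] [PseudoMetricSpace Y] (f : X → Y) : Prop :=
  (∃ p₁ p₂ : ℝ → ℝ, Monotone p₁ ∧ Monotone p₂ ∧
      Tendsto p₁ atTop atTop ∧ Tendsto p₂ atTop atTop ∧
      ∀ x₁ x₂ : X, p₁ (dist x₁ x₂) ≤ dist (f x₁) (f x₂) ∧ dist (f x₁) (f x₂) ≤ p₂ (dist x₁ x₂)) ∧
  ∃ R : ℝ, 0 < R ∧ ∀ y : Y, ∃ x : X, dist y (f x) < R

/-- A family `𝒳` (of subsets of an ambient space) is `r`-decomposable over a family `𝒴`: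
each `A ∈ 𝒳` splits as `A = A₀ ∪ A₁`, each `A_i` being an `r`-disjoint union of members
of a subfamily of `𝒴`. -/
def RDecomp {X : Type*} [PseudoMetricSpace X] (r : ℝ) (F G : Set (Set X)) : Prop :=
  ∀ A ∈ F, ∃ A₀ A₁ : Set X, A = A₀ ∪ A₁ ∧
    (∃ P ⊆ G, A₀ = ⋃₀ P ∧ RDisjoint r P) ∧
    (∃ P ⊆ G, A₁ = ⋃₀ P ∧ RDisjoint r P)

/-- `F ∈ D_α`, finite decomposition complexity: `D_0` consists of the bounded
families, and for `α > 0`, `F ∈ D_α` iff for every `r > 0` there are `β < α` and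
`G ∈ D_β` such that `F` is `r`-decomposable over `G`. -/
def InD {X : Type*} [PseudoMetricSpace X] (F : Set (Set X)) (α : Ordinal.{0}) : Prop :=
  if α = 0 then ∃ R : ℝ, ∀ A ∈ F, ∀ x ∈ A, ∀ y ∈ A, dist x y ≤ R
  else ∀ r : ℝ, 0 < r → ∃ β : {β : Ordinal.{0} // β < α},
    ∃ G : Set (Set X), InD G β.1 ∧ RDecomp r F G
termination_by α
decreasing_by exact β.2

end AsympPaper


open AsympPaper

/-!
Merge the levels `n` and `n + 1` of `as⊔_{i=n}^∞ X_{ω+1}^{(i,n)}` into one block; since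
`triHalf (i + 1) - triHalf i = i`, points of distinct blocks are at distance at least `n + 1`.
Within a block, with `c = 2 ^ n` and `q = n + 1`, a point has at most one coordinate outside
`c ℤ`. If all its coordinates are `q`-close to `c ℤ`, it lies in the `q`-ball around a point of
the lattice `c ℤ^i` (family `𝒰₀`); otherwise one coordinate lies in a gap
`[m c + q, (m + 1) c - q]` and all others are on the lattice, so it lies on a segment of a lattice
line (family `𝒰₁`). For `n ≥ 4` we have `c ≥ 3 q`, which makes distinct balls `q`-apart, and
distinct segments are `q`-apart by construction.
-/

namespace AsympPaper

lemma triHalf_succ (i : ℕ) : triHalf (i + 1) = triHalf i + i := by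
  have key : (i + 1) * i / 2 = i * (i - 1) / 2 + i := by
    rw [← Nat.add_mul_div_left _ i two_pos]
    congr 1
    rcases i with _ | i
    · rfl
    · simp only [Nat.add_sub_cancel]
      ring
  simp only [triHalf, Nat.add_sub_cancel, key]
  push_cast
  ring

lemma triHalf_mono : Monotone triHalf :=
  monotone_nat_of_le_succ fun i => by
    rw [triHalf_succ]
    exact le_add_of_nonneg_right i.cast_nonneg

lemma sub_one_le_triHalf_sub {l k : ℕ} (h : l < k) : (k : ℝ) - 1 ≤ triHalf k - triHalf l := by
  obtain ⟨m, rfl⟩ := Nat.exists_eq_add_of_lt h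
  have := triHalf_mono (Nat.le_add_right l m)
  rw [triHalf_succ]
  push_cast
  linarith

lemma ofReal_le_setEDist {X : Type*} [PseudoMetricSpace X] {U V : Set X} {ε : ℝ}
    (h : ∀ x ∈ U, ∀ y ∈ V, ε ≤ dist x y) : ENNReal.ofReal ε ≤ setEDist U V :=
  le_iInf₂ fun x hx => le_iInf₂ fun y hy => by
    rw [edist_dist]
    exact ENNReal.ofReal_le_ofReal (h x hx y hy)

lemma rDisjoint_of_le_dist {X : Type*} [PseudoMetricSpace X] {𝒰 : Set (Set X)} {r ε : ℝ}
    (hr : 0 ≤ r) (hrε : r < ε)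
    (h : ∀ U ∈ 𝒰, ∀ V ∈ 𝒰, U ≠ V → ∀ x ∈ U, ∀ y ∈ V, ε ≤ dist x y) : RDisjoint r 𝒰 :=
  fun U hU V hV hne =>
    ((ENNReal.ofReal_lt_ofReal_iff (hr.trans_lt hrε)).2 hrε).trans_le
      (ofReal_le_setEDist (h U hU V hV hne))

section LatticeGaps

variable {c q t s : ℝ}

/-- The points of `[m c, (m + 1) c]` at distance at least `q` from the lattice `c ℤ`. -/
def latticeGap (c q : ℝ) (m : ℤ) : Set ℝ := Icc (m * c + q) ((m + 1) * c - q)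

lemma le_abs_intCast_mul_sub (hc : 0 ≤ c) {b b' : ℤ} (h : b ≠ b') :
    c ≤ |b * c - b' * c| := by
  have hbb : (1 : ℝ) ≤ |(b : ℝ) - b'| := by exact_mod_cast Int.one_le_abs (sub_ne_zero.2 h)
  rw [← sub_mul, abs_mul, abs_of_nonneg hc]
  nlinarith

lemma sub_two_mul_le_abs_sub (hc : 0 ≤ c) {b b' : ℤ} (h : b ≠ b')
    (ht : |t - b * c| ≤ q) (hs : |s - b' * c| ≤ q) : c - 2 * q ≤ |t - s| := by
  have := le_abs_intCast_mul_sub hc h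
  have := abs_sub_le (b * c) t (b' * c)
  have := abs_sub_le t s (b' * c)
  rw [abs_sub_comm] at ht
  linarith

lemma le_abs_sub_intCast_mul_of_mem_latticeGap (hc : 0 ≤ c) {m : ℤ} (ht : t ∈ latticeGap c q m)
    (b : ℤ) : q ≤ |t - b * c| := by
  obtain ⟨ht₁, ht₂⟩ := ht
  rcases le_or_gt b m with hb | hb
  · have : (b : ℝ) * c ≤ m * c := mul_le_mul_of_nonneg_right (by exact_mod_cast hb) hc
    exact (by linarith : q ≤ t - b * c).trans (le_abs_self _)
  · have : ((m : ℝ) + 1) * c ≤ b * c :=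
      mul_le_mul_of_nonneg_right (by exact_mod_cast Int.add_one_le_of_lt hb) hc
    rw [abs_sub_comm]
    exact (by linarith : q ≤ b * c - t).trans (le_abs_self _)

lemma two_mul_le_abs_sub_of_mem_latticeGap (hc : 0 ≤ c) {m m' : ℤ} (hm : m ≠ m')
    (ht : t ∈ latticeGap c q m) (hs : s ∈ latticeGap c q m') : 2 * q ≤ |t - s| := by
  wlog hlt : m < m' generalizing t s m m'
  · rw [abs_sub_comm]
    exact this hm.symm hs ht (hm.lt_or_gt.resolve_left hlt)
  have : ((m : ℝ) + 1) * c ≤ m' * c :=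
    mul_le_mul_of_nonneg_right (by exact_mod_cast Int.add_one_le_of_lt hlt) hc
  rw [abs_sub_comm]
  exact (by linarith [ht.2, hs.1] : 2 * q ≤ s - t).trans (le_abs_self _)

lemma mem_latticeGap_floor (hc : 0 < c) (h : ∀ b : ℤ, q < |t - b * c|) :
    t ∈ latticeGap c q ⌊t / c⌋ := by
  set m := ⌊t / c⌋
  have hm : m * c ≤ t := (le_div_iff₀ hc).1 (Int.floor_le _)
  have hm' : t < (m + 1) * c := (div_lt_iff₀ hc).1 (Int.lt_floor_add_one _)
  have h₁ := h m
  have h₂ := h (m + 1)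
  rw [abs_of_nonneg (sub_nonneg.2 hm)] at h₁
  rw [abs_of_neg (by push_cast; linarith)] at h₂
  push_cast at h₂
  constructor <;> linarith

end LatticeGaps

namespace XTail

variable {k n : ℕ}

lemma le_idx_and_mem (p : XTail k n) : n ≤ p.idx ∧ (p.pt : Amb) ∈ XSet k p.idx n := by
  have h := p.pt.2
  split_ifs at h with hlt
  · exact absurd h (notMem_empty _)
  · exact ⟨not_lt.1 hlt, h⟩

lemma eq_of_not_isMultiple (p : XTail 1 n) {j j' : ℕ} (hj : ¬ IsMultiple n ((p.pt : Amb) j))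
    (hj' : ¬ IsMultiple n ((p.pt : Amb) j')) : j = j' := by
  obtain ⟨-, hsupp, hcard⟩ := le_idx_and_mem p
  have hlt : ∀ {i}, ¬ IsMultiple n ((p.pt : Amb) i) → i < p.idx := fun {i} hi => by
    by_contra hge
    exact hi ⟨0, by rw [hsupp i (not_lt.1 hge)]; simp⟩
  exact (Set.ncard_le_one ((Set.finite_Iio p.idx).subset fun i hi => hi.1)).1 hcard
    j ⟨hlt hj, hj⟩ j' ⟨hlt hj', hj'⟩

lemma abs_apply_sub_le_dist (p p' : XTail k n) (j : ℕ) :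
    |(p.pt : Amb) j - (p'.pt : Amb) j| ≤ dist p p' := by
  have h := BoundedContinuousFunction.dist_coe_le_dist (f := (p.pt : Amb)) (g := p'.pt) j
  rw [Real.dist_eq] at h
  exact h.trans (le_add_of_nonneg_right (abs_nonneg _))

/-- Levels `n` and `n + 1`, only `n` apart, form one block. -/
def block (p : XTail k n) : ℕ := max p.idx (n + 1)

lemma le_dist_of_block_lt {p p' : XTail k n} (h : block p < block p') :
    (n : ℝ) + 1 ≤ dist p p' := by
  have hp : p.idx < p'.idx ∧ n + 2 ≤ p'.idx := by unfold block at h; omega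
  have hgap := sub_one_le_triHalf_sub hp.1
  have hidx : (n : ℝ) + 2 ≤ p'.idx := by exact_mod_cast hp.2
  have : triHalf p'.idx - triHalf p.idx ≤ |triHalf p.idx - triHalf p'.idx| :=
    (le_abs_self _).trans_eq (abs_sub_comm _ _)
  change _ ≤ dist (p.pt : Amb) (p'.pt : Amb) + _
  linarith [dist_nonneg (x := (p.pt : Amb)) (y := p'.pt)]

lemma le_dist_of_block_ne {p p' : XTail k n} (h : block p ≠ block p') :
    (n : ℝ) + 1 ≤ dist p p' := by
  rcases h.lt_or_gt with h | h
  · exact le_dist_of_block_lt h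
  · exact dist_comm p p' ▸ le_dist_of_block_lt h

lemma abs_triHalf_sub_le_of_block_eq {p p' : XTail k n} (h : block p = block p') :
    |triHalf p.idx - triHalf p'.idx| ≤ n := by
  have hc : p.idx = p'.idx ∨ (p.idx = n ∧ p'.idx = n + 1) ∨ (p.idx = n + 1 ∧ p'.idx = n) := by
    have := (le_idx_and_mem p).1
    have := (le_idx_and_mem p').1
    unfold block at h
    omega
  rcases hc with hc | ⟨hp, hp'⟩ | ⟨hp, hp'⟩
  · simp [hc]
  · simp [hp, hp', triHalf_succ]
  · simp [hp, hp', triHalf_succ]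

lemma dist_le_of_block_eq {p p' : XTail k n} (h : block p = block p') {R : ℝ} (hR : 0 ≤ R)
    (hpt : ∀ j, |(p.pt : Amb) j - (p'.pt : Amb) j| ≤ R) : dist p p' ≤ R + n := by
  have := (BoundedContinuousFunction.dist_le hR).2 fun j => (Real.dist_eq _ _).trans_le (hpt j)
  change dist (p.pt : Amb) (p'.pt : Amb) + _ ≤ _
  linarith [abs_triHalf_sub_le_of_block_eq h]

end XTail

open XTail

lemma three_mul_add_three_le_two_pow {r : ℕ} (hr : 4 ≤ r) : 3 * (r : ℝ) + 3 ≤ 2 ^ r := by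
  induction r, hr using Nat.le_induction with
  | base => norm_num
  | succ r hr ih =>
    push_cast
    rw [pow_succ]
    linarith

variable {r : ℕ}

def star (r I : ℕ) (g : ℕ → ℤ) : Set (XTail 1 r) :=
  {p | block p = I ∧ ∀ j, |(p.pt : Amb) j - g j * 2 ^ r| ≤ r + 1}

/-- The value `a j` plays no role. -/
def segment (r I j : ℕ) (a : ℕ → ℤ) (m : ℤ) : Set (XTail 1 r) :=
  {p | block p = I ∧ (∀ j', j' ≠ j → (p.pt : Amb) j' = a j' * 2 ^ r) ∧
    (p.pt : Amb) j ∈ latticeGap (2 ^ r) (r + 1) m}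

def stars (r : ℕ) : Set (Set (XTail 1 r)) := {U | ∃ I g, U = star r I g}

def segments (r : ℕ) : Set (Set (XTail 1 r)) := {U | ∃ I j a m, U = segment r I j a m}

lemma uniformlyBdd_stars : UniformlyBdd (stars r) := by
  refine ⟨2 * (r + 1) + r, ?_⟩
  rintro _ ⟨I, g, rfl⟩ x ⟨hxI, hx⟩ y ⟨hyI, hy⟩
  refine dist_le_of_block_eq (hxI.trans hyI.symm) (by positivity) fun j => ?_
  have := abs_sub_le ((x.pt : Amb) j) (g j * 2 ^ r) ((y.pt : Amb) j)
  rw [abs_sub_comm (_ * _)] at this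
  linarith [hx j, hy j]

lemma uniformlyBdd_segments : UniformlyBdd (segments r) := by
  refine ⟨2 ^ r + r, ?_⟩
  rintro _ ⟨I, j, a, m, rfl⟩ x ⟨hxI, hxa, hxm⟩ y ⟨hyI, hya, hym⟩
  refine dist_le_of_block_eq (hxI.trans hyI.symm) (by positivity) fun j' => ?_
  rcases eq_or_ne j' j with rfl | hj'
  · rw [abs_le]
    constructor <;> linarith [hxm.1, hxm.2, hym.1, hym.2]
  · simp [hxa j' hj', hya j' hj']

lemma rDisjoint_stars (hr : 4 ≤ r) : RDisjoint r (stars r) := by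
  refine rDisjoint_of_le_dist r.cast_nonneg (lt_add_one (r : ℝ)) ?_
  rintro _ ⟨I, g, rfl⟩ _ ⟨I', g', rfl⟩ hne x ⟨hxI, hx⟩ y ⟨hyI, hy⟩
  rcases eq_or_ne I I' with rfl | hI
  · obtain ⟨j, hj⟩ := Function.ne_iff.1 fun h : g = g' => hne (h ▸ rfl)
    have := sub_two_mul_le_abs_sub (by positivity) hj (hx j) (hy j)
    linarith [three_mul_add_three_le_two_pow hr, abs_apply_sub_le_dist x y j]
  · exact le_dist_of_block_ne (hxI.trans_ne (hI.trans_eq hyI.symm))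

lemma rDisjoint_segments (hr : 4 ≤ r) : RDisjoint r (segments r) := by
  refine rDisjoint_of_le_dist r.cast_nonneg (lt_add_one (r : ℝ)) ?_
  rintro _ ⟨I, j, a, m, rfl⟩ _ ⟨I', j', a', m', rfl⟩ hne x ⟨hxI, hxa, hxm⟩ y ⟨hyI, hya, hym⟩
  rcases eq_or_ne I I' with rfl | hI
  swap
  · exact le_dist_of_block_ne (hxI.trans_ne (hI.trans_eq hyI.symm))
  have hc : (0 : ℝ) ≤ 2 ^ r := by positivity
  have hq : (0 : ℝ) ≤ r + 1 := by positivity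
  rcases eq_or_ne j j' with rfl | hj
  · rcases eq_or_ne m m' with rfl | hm
    · obtain ⟨j'', hj'', ha⟩ : ∃ j'' ≠ j, a j'' ≠ a' j'' := by
        by_contra! h
        exact hne (by simp +contextual [segment, h])
      have := le_abs_intCast_mul_sub hc ha
      rw [← hxa j'' hj'', ← hya j'' hj''] at this
      linarith [abs_apply_sub_le_dist x y j'', three_mul_add_three_le_two_pow hr]
    · have := two_mul_le_abs_sub_of_mem_latticeGap hc hm hxm hym
      linarith [abs_apply_sub_le_dist x y j]
  · have := le_abs_sub_intCast_mul_of_mem_latticeGap hc hxm (a' j)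
    rw [← hya j hj] at this
    exact this.trans (abs_apply_sub_le_dist x y j)

lemma covers_stars_union_segments : Covers (stars r ∪ segments r) := by
  intro p
  by_cases hnear : ∀ j, ∃ b : ℤ, |(p.pt : Amb) j - b * 2 ^ r| ≤ r + 1
  · choose g hg using hnear
    exact ⟨star r (block p) g, Or.inl ⟨_, g, rfl⟩, rfl, hg⟩
  push Not at hnear
  obtain ⟨j, hj⟩ := hnear
  have hjm : ¬ IsMultiple r ((p.pt : Amb) j) := by
    rintro ⟨b, hb⟩
    have := hj b
    rw [hb, sub_self, abs_zero] at this
    linarith [(r.cast_nonneg : (0 : ℝ) ≤ r)]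
  have hlattice : ∀ j', ∃ b : ℤ, j' ≠ j → (p.pt : Amb) j' = b * 2 ^ r := fun j' => by
    by_cases hj' : IsMultiple r ((p.pt : Amb) j')
    · exact hj'.imp fun b hb _ => hb
    · exact ⟨0, fun hne => (hne (eq_of_not_isMultiple p hj' hjm)).elim⟩
  choose a ha using hlattice
  exact ⟨segment r (block p) j a _, Or.inr ⟨_, j, a, _, rfl⟩, rfl, ha,
    mem_latticeGap_floor (by positivity) hj⟩

end AsympPaper

/-- For every natural number `r ≥ 4`, taking `n = r`, there exist
`r`-disjoint uniformly bounded families `𝒰₀`, `𝒰₁` of subsets of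
`as⊔_{i=n}^∞ X_{ω+1}^{(i,n)}` such that `𝒰₀ ∪ 𝒰₁` covers it. -/
theorem statement_3 (r : ℕ) (hr : 4 ≤ r) :
    ∃ 𝒰₀ 𝒰₁ : Set (Set (XTail 1 r)),
      UniformlyBdd 𝒰₀ ∧ UniformlyBdd 𝒰₁ ∧
      RDisjoint (r : ℝ) 𝒰₀ ∧ RDisjoint (r : ℝ) 𝒰₁ ∧
      Covers (𝒰₀ ∪ 𝒰₁) :=
  ⟨stars r, segments r, uniformlyBdd_stars, uniformlyBdd_segments, rDisjoint_stars hr,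
    rDisjoint_segments hr, covers_stars_union_segments⟩
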